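/- arXiv:2506.06079 — 2 statements merged into one kernel-verified Lean document; each statement's English description precedes it below -/
import Mathlib

section
/- Let f : ℝⁿ → ℝⁿ be continuously differentiable, B ∈ ℝ^{n×m}, C ∈ ℝ^{m×n}, and let P ∈ ℝ^{n×n} be symmetric positive definite such that P·Df(x) + Df(x)ᵀ·P ⪯ 0 for all x ∈ ℝⁿ and P·B = Cᵀ. Let u₁, u₂ : ℝ → ℝ^m, h : ℝ → ℝ^m be functions, and let x₁, x₂ : ℝ → ℝⁿ be differentiable with x_i'(t) = f(x_i(t)) + B·u_i(t) for i = 1, 2 and all t. Define outputs e_i(t) := C·x_i(t) + h(t) and the storage function V(t) := ½ (x₁(t) − x₂(t))ᵀ P (x₁(t) − x₂(t)). Then V is differentiable and V'(t) ≤ ⟨e₁(t) − e₂(t), u₁(t) − u₂(t)⟩ for all t. -/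
open Matrix

noncomputable def jacobianMatrix {n p : ℕ} (f : (Fin n → ℝ) → (Fin p → ℝ))
    (x : Fin n → ℝ) : Matrix (Fin p) (Fin n) ℝ :=
  Matrix.of fun i j => fderiv ℝ f x (Pi.single j 1) i

lemma jac_mulVec {n : ℕ} (f : (Fin n → ℝ) → (Fin n → ℝ)) (x v : Fin n → ℝ) :
    (jacobianMatrix f x).mulVec v = fderiv ℝ f x v := by
  have hv : v = ∑ j, v j • (Pi.single j 1 : Fin n → ℝ) := by
    ext i
    simp [Finset.sum_apply, Pi.single_apply]
  ext i
  conv_rhs => rw [hv]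
  rw [map_sum]
  simp only [_root_.map_smul]
  simp [jacobianMatrix, mulVec, dotProduct, Finset.sum_apply, mul_comm]

lemma sym_dot {n : ℕ} (P : Matrix (Fin n) (Fin n) ℝ) (hsym : Pᵀ = P)
    (v w : Fin n → ℝ) : v ⬝ᵥ P.mulVec w = w ⬝ᵥ P.mulVec v := by
  rw [dotProduct_mulVec]
  nth_rewrite 1 [← hsym]
  rw [vecMul_transpose, dotProduct_comm]

lemma quad_nonpos {n : ℕ} (f : (Fin n → ℝ) → (Fin n → ℝ))
    (P : Matrix (Fin n) (Fin n) ℝ) (hsym : Pᵀ = P)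
    (hLMI : ∀ x : Fin n → ℝ,
      (-(P * jacobianMatrix f x + (jacobianMatrix f x)ᵀ * P)).PosSemidef)
    (y v : Fin n → ℝ) : v ⬝ᵥ P.mulVec (fderiv ℝ f y v) ≤ 0 := by
  have h0 := (hLMI y).dotProduct_mulVec_nonneg v
  set J := jacobianMatrix f y with hJ
  simp only [star_trivial, neg_mulVec, dotProduct_neg, add_mulVec, dotProduct_add] at h0
  have h1 : v ⬝ᵥ (P * J).mulVec v = v ⬝ᵥ P.mulVec (fderiv ℝ f y v) := by
    rw [← mulVec_mulVec, jac_mulVec]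
  have h2 : v ⬝ᵥ (Jᵀ * P).mulVec v = v ⬝ᵥ P.mulVec (fderiv ℝ f y v) := by
    rw [← mulVec_mulVec, dotProduct_mulVec, vecMul_transpose, jac_mulVec,
      sym_dot P hsym]
  rw [h1, h2] at h0
  linarith

/-- incremental passivity of `ẋ = f(x) + Bu`, `e = Cx + h(t)` with
storage function `V = ½(x₁−x₂)ᵀP(x₁−x₂)`, under `P ≻ 0`,
`P·Df(x) + Df(x)ᵀ·P ⪯ 0` and `P·B = Cᵀ`. -/
theorem stmt_3 (n m : ℕ) (f : (Fin n → ℝ) → (Fin n → ℝ)) (hf : ContDiff ℝ 1 f)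
    (B : Matrix (Fin n) (Fin m) ℝ) (C : Matrix (Fin m) (Fin n) ℝ)
    (P : Matrix (Fin n) (Fin n) ℝ) (hP : P.PosDef)
    (hLMI : ∀ x : Fin n → ℝ,
      (-(P * jacobianMatrix f x + (jacobianMatrix f x)ᵀ * P)).PosSemidef)
    (hPB : P * B = Cᵀ)
    (u₁ u₂ h : ℝ → Fin m → ℝ) (x₁ x₂ : ℝ → Fin n → ℝ)
    (hx₁ : ∀ t : ℝ, HasDerivAt x₁ (f (x₁ t) + B.mulVec (u₁ t)) t)
    (hx₂ : ∀ t : ℝ, HasDerivAt x₂ (f (x₂ t) + B.mulVec (u₂ t)) t) :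
    ∀ t : ℝ, ∃ d : ℝ,
      HasDerivAt (fun s => (1/2 : ℝ) * ((x₁ s - x₂ s) ⬝ᵥ P.mulVec (x₁ s - x₂ s))) d t ∧
      d ≤ ((C.mulVec (x₁ t) + h t) - (C.mulVec (x₂ t) + h t)) ⬝ᵥ (u₁ t - u₂ t) := by
  intro t
  have hsym : Pᵀ = P := by have h := hP.isHermitian; simp at h; exact h
  set Δ : ℝ → Fin n → ℝ := fun s => x₁ s - x₂ s with hΔdef
  set Δ' : Fin n → ℝ :=
    (f (x₁ t) + B.mulVec (u₁ t)) - (f (x₂ t) + B.mulVec (u₂ t)) with hΔ'def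
  have hΔ : HasDerivAt Δ Δ' t := (hx₁ t).sub (hx₂ t)
  have hΔi : ∀ i, HasDerivAt (fun s => Δ s i) (Δ' i) t := hasDerivAt_pi.mp hΔ
  -- derivative of the storage function
  have hV : HasDerivAt (fun s => (1/2 : ℝ) * (Δ s ⬝ᵥ P.mulVec (Δ s)))
      (Δ t ⬝ᵥ P.mulVec Δ') t := by
    have key : HasDerivAt (fun s => Δ s ⬝ᵥ P.mulVec (Δ s))
        (Δ' ⬝ᵥ P.mulVec (Δ t) + Δ t ⬝ᵥ P.mulVec Δ') t := by
      have hexp : ∀ s, Δ s ⬝ᵥ P.mulVec (Δ s) = ∑ i, ∑ j, Δ s i * (P i j * Δ s j) := by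
        intro s; simp [dotProduct, mulVec, Finset.mul_sum]
      simp only [hexp]
      have hd : HasDerivAt (fun s => ∑ i, ∑ j, Δ s i * (P i j * Δ s j))
          (∑ i, ∑ j, (Δ' i * (P i j * Δ t j) + Δ t i * (P i j * Δ' j))) t := by
        apply HasDerivAt.fun_sum; intro i _
        apply HasDerivAt.fun_sum; intro j _
        exact (hΔi i).mul ((hΔi j).const_mul (P i j))
      convert hd using 1
      simp only [Finset.sum_add_distrib]
      congr 1 <;> simp [dotProduct, mulVec, Finset.mul_sum]
    have hh := key.const_mul (1/2 : ℝ)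
    refine hh.congr_deriv ?_
    rw [sym_dot P hsym Δ' (Δ t)]
    ring
  refine ⟨Δ t ⬝ᵥ P.mulVec Δ', hV, ?_⟩
  -- split the derivative
  have hΔ'eq : Δ' = (f (x₁ t) - f (x₂ t)) + B.mulVec (u₁ t - u₂ t) := by
    rw [hΔ'def, Matrix.mulVec_sub]; abel
  have hsplit : Δ t ⬝ᵥ P.mulVec Δ'
      = Δ t ⬝ᵥ P.mulVec (f (x₁ t) - f (x₂ t))
        + Δ t ⬝ᵥ P.mulVec (B.mulVec (u₁ t - u₂ t)) := by
    rw [hΔ'eq, Matrix.mulVec_add, dotProduct_add]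
  -- second term equals the RHS
  have hCΔ : (C.mulVec (x₁ t) + h t) - (C.mulVec (x₂ t) + h t)
      = C.mulVec (x₁ t - x₂ t) := by
    rw [Matrix.mulVec_sub]; abel
  have hsecond : Δ t ⬝ᵥ P.mulVec (B.mulVec (u₁ t - u₂ t))
      = ((C.mulVec (x₁ t) + h t) - (C.mulVec (x₂ t) + h t)) ⬝ᵥ (u₁ t - u₂ t) := by
    rw [mulVec_mulVec, hPB, dotProduct_mulVec, vecMul_transpose, hCΔ]
  -- first term nonpositive via the segment argument
  have hfirst : Δ t ⬝ᵥ P.mulVec (f (x₁ t) - f (x₂ t)) ≤ 0 := by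
    set v := Δ t with hv
    set a := x₂ t with ha
    set g : ℝ → ℝ := fun s => v ⬝ᵥ P.mulVec (f (a + s • v)) with hg
    have hrw : ∀ w : Fin n → ℝ, v ⬝ᵥ P.mulVec w = ∑ i, P.vecMul v i * w i := by
      intro w; rw [dotProduct_mulVec]; rfl
    have hgd : ∀ s : ℝ, HasDerivAt g (v ⬝ᵥ P.mulVec (fderiv ℝ f (a + s • v) v)) s := by
      intro s
      have hline : HasDerivAt (fun s : ℝ => a + s • v) v s := by
        simpa using ((hasDerivAt_id s).smul_const v).const_add a
      have hF : HasDerivAt (fun s : ℝ => f (a + s • v))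
          (fderiv ℝ f (a + s • v) v) s :=
        ((hf.differentiable one_ne_zero (a + s • v)).hasFDerivAt).comp_hasDerivAt s hline
      have hFi := hasDerivAt_pi.mp hF
      have hsum : HasDerivAt (fun s : ℝ => ∑ i, P.vecMul v i * f (a + s • v) i)
          (∑ i, P.vecMul v i * fderiv ℝ f (a + s • v) v i) s := by
        apply HasDerivAt.fun_sum; intro i _
        exact (hFi i).const_mul (P.vecMul v i)
      rw [hg]
      simp only [hrw]
      exact hsum
    have hmono : Antitone g := by
      apply antitone_of_deriv_nonpos
      · exact fun s => (hgd s).differentiableAt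
      · intro s
        rw [(hgd s).deriv]
        exact quad_nonpos f P hsym hLMI (a + s • v) v
    have h10 : g 1 ≤ g 0 := hmono (by norm_num)
    have e1 : a + (1:ℝ) • v = x₁ t := by
      rw [ha, hv, hΔdef]; simp
    have e0 : a + (0:ℝ) • v = x₂ t := by simp [ha]
    rw [hg] at h10
    simp only [e1, e0] at h10
    rw [Matrix.mulVec_sub, dotProduct_sub]
    linarith
  rw [hsplit, hsecond]
  linarith
end

section
/- Let A ∈ ℝ^{n×n_Z}, B ∈ ℝ^{n×m}, C ∈ ℝ^{m×n_Z}, E ∈ ℝ^{n×q}, F ∈ ℝ^{m×q}, K ∈ ℝ^{m×n_Z} (n_Z ≥ n), 𝓘 := [I_n 0_{n×(n_Z−n)}], Q : ℝⁿ → ℝ^{n_Z−n} any map with Z(x) := (x, Q(x)). Let 𝒫 ∈ ℝ^{n×n} be symmetric positive definite with 𝓘ᵀ𝒫(A + BK) + (A + BK)ᵀ𝒫𝓘 ⪯ 0 and 𝓘ᵀ𝒫B = Cᵀ. Let S ∈ ℝ^{q×q} with S + Sᵀ = 0, Ξ ∈ ℝ^{q×m}, α > 0, and K̂ ∈ ℝ^{m×m}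 positive semidefinite. Let w : ℝ → ℝ^q be a function. Suppose x : ℝ → ℝⁿ and η : ℝ → ℝ^q are differentiable and satisfy the closed loop x'(t) = A·Z(x(t)) + B·( K·Z(x(t)) + Ξᵀ·η(t) − K̂·e(t) ) + E·w(t), η'(t) = S·η(t) − α·Ξ·e(t) with e(t) := C·Z(x(t)) + F·w(t); suppose x_ss : ℝ → ℝⁿ, η_ss : ℝ → ℝ^q are differentiable and satisfy x_ss'(t) = A·Z(x_ss(t)) + B·( K·Z(x_ss(t)) + Ξᵀ·η_ss(t) ) + E·w(t), η_ss'(t) = S·η_ss(t), and C·Z(x_ss(t)) + F·w(t) = 0 for all t. Then V_aug(t) := ½(x(t) − x_ss(t))ᵀ𝒫(x(t) − x_ss(t)) + (1/(2α))·‖η(t) − η_ss(t)‖² is differentiable and V_aug'(t) ≤ −e(t)ᵀ·K̂·e(t) ≤ 0 for all t. -/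
open Matrix

lemma dot_shift {a b : Type*} [Fintype a] [Fintype b]
    (M : Matrix a b ℝ) (u : b → ℝ) (v : a → ℝ) :
    (M *ᵥ u) ⬝ᵥ v = u ⬝ᵥ (Mᵀ *ᵥ v) := by
  rw [dotProduct_comm, dotProduct_mulVec, ← mulVec_transpose, dotProduct_comm,
    dotProduct_mulVec, ← mulVec_transpose, transpose_transpose]

lemma hasDerivAt_dot {a : Type*} [Fintype a]
    {f g : ℝ → a → ℝ} {f' g' : a → ℝ} {t : ℝ}
    (hf : HasDerivAt f f' t) (hg : HasDerivAt g g' t) :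
    HasDerivAt (fun s => f s ⬝ᵥ g s) (f' ⬝ᵥ g t + f t ⬝ᵥ g') t := by
  have hfi := hasDerivAt_pi.1 hf
  have hgi := hasDerivAt_pi.1 hg
  simp only [dotProduct]
  have h := HasDerivAt.fun_sum (fun i (_ : i ∈ (Finset.univ : Finset a)) =>
    (show HasDerivAt (fun s => f s i * g s i) _ t from (hfi i).mul (hgi i)))
  rw [Finset.sum_add_distrib] at h
  exact h

lemma hasDerivAt_dot_mulVec {a b : Type*} [Fintype a] [Fintype b]
    (M : Matrix a b ℝ) {f : ℝ → a → ℝ} {g : ℝ → b → ℝ} {f' : a → ℝ} {g' : b → ℝ} {t : ℝ}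
    (hf : HasDerivAt f f' t) (hg : HasDerivAt g g' t) :
    HasDerivAt (fun s => f s ⬝ᵥ M *ᵥ g s) (f' ⬝ᵥ M *ᵥ g t + f t ⬝ᵥ M *ᵥ g') t := by
  have hMg : HasDerivAt (fun s => M *ᵥ g s) (M *ᵥ g') t := by
    rw [hasDerivAt_pi]
    intro i
    simp only [Matrix.mulVec, dotProduct]
    exact HasDerivAt.fun_sum fun j _ => ((hasDerivAt_pi.1 hg) j).const_mul (M i j)
  exact hasDerivAt_dot hf hMg


/-- The library vector `Z(x) = (x, Q(x)) ∈ ℝ^{n_Z}`, with `ℝ^{n_Z}` split as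
`ℝ^n × ℝ^{n_Z − n}`. -/
def Zvec {n p : ℕ} (Q : (Fin n → ℝ) → (Fin p → ℝ)) (x : Fin n → ℝ) :
    (Fin n ⊕ Fin p) → ℝ :=
  Sum.elim x (Q x)

/-- The matrix `𝓘 = [I_n  0_{n×p}]`. -/
def calI (n p : ℕ) : Matrix (Fin n) (Fin n ⊕ Fin p) ℝ :=
  Matrix.fromCols 1 0

/-- dissipation inequality for the regulator
`η̇ = Sη − αΞe`, `u = K·Z(x) + Ξᵀη − K̂e`: the augmented storage function
`V_aug = ½(x−x_ss)ᵀ𝒫(x−x_ss) + (1/(2α))‖η−η_ss‖²` satisfies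
`V_aug' ≤ −eᵀK̂e ≤ 0`. -/
theorem stmt_11 (n nZ m q : ℕ) (hnZ : n ≤ nZ)
    (A : Matrix (Fin n) (Fin n ⊕ Fin (nZ - n)) ℝ)
    (B : Matrix (Fin n) (Fin m) ℝ)
    (C : Matrix (Fin m) (Fin n ⊕ Fin (nZ - n)) ℝ)
    (E : Matrix (Fin n) (Fin q) ℝ) (F : Matrix (Fin m) (Fin q) ℝ)
    (K : Matrix (Fin m) (Fin n ⊕ Fin (nZ - n)) ℝ)
    (Q : (Fin n → ℝ) → (Fin (nZ - n) → ℝ))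
    (P : Matrix (Fin n) (Fin n) ℝ) (hP : P.PosDef)
    (hLMI : (-((calI n (nZ - n))ᵀ * (P * (A + B * K)) +
        ((A + B * K)ᵀ * P) * calI n (nZ - n))).PosSemidef)
    (hPB : (calI n (nZ - n))ᵀ * (P * B) = Cᵀ)
    (S : Matrix (Fin q) (Fin q) ℝ) (hS : S + Sᵀ = 0)
    (Ξ : Matrix (Fin q) (Fin m) ℝ) (α : ℝ) (hα : 0 < α)
    (Khat : Matrix (Fin m) (Fin m) ℝ) (hKhat : Khat.PosSemidef)
    (w : ℝ → Fin q → ℝ)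
    (x xss : ℝ → Fin n → ℝ) (η ηss : ℝ → Fin q → ℝ)
    (hx : ∀ t : ℝ, HasDerivAt x
      (A.mulVec (Zvec Q (x t)) +
        B.mulVec (K.mulVec (Zvec Q (x t)) + Ξᵀ.mulVec (η t) -
          Khat.mulVec (C.mulVec (Zvec Q (x t)) + F.mulVec (w t))) +
        E.mulVec (w t)) t)
    (hη : ∀ t : ℝ, HasDerivAt η
      (S.mulVec (η t) -
        α • Ξ.mulVec (C.mulVec (Zvec Q (x t)) + F.mulVec (w t))) t)
    (hxss : ∀ t : ℝ, HasDerivAt xss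
      (A.mulVec (Zvec Q (xss t)) +
        B.mulVec (K.mulVec (Zvec Q (xss t)) + Ξᵀ.mulVec (ηss t)) +
        E.mulVec (w t)) t)
    (hηss : ∀ t : ℝ, HasDerivAt ηss (S.mulVec (ηss t)) t)
    (hess : ∀ t : ℝ, C.mulVec (Zvec Q (xss t)) + F.mulVec (w t) = 0) :
    ∀ t : ℝ, ∃ d : ℝ,
      HasDerivAt (fun s =>
        (1/2 : ℝ) * ((x s - xss s) ⬝ᵥ P.mulVec (x s - xss s)) +
        (1 / (2 * α)) * ((η s - ηss s) ⬝ᵥ (η s - ηss s))) d t ∧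
      d ≤ -((C.mulVec (Zvec Q (x t)) + F.mulVec (w t)) ⬝ᵥ
            Khat.mulVec (C.mulVec (Zvec Q (x t)) + F.mulVec (w t))) ∧
      -((C.mulVec (Zvec Q (x t)) + F.mulVec (w t)) ⬝ᵥ
          Khat.mulVec (C.mulVec (Zvec Q (x t)) + F.mulVec (w t))) ≤ 0 := by
  intro t
  set 𝓘 := calI n (nZ - n) with h𝓘
  set e : Fin m → ℝ := C.mulVec (Zvec Q (x t)) + F.mulVec (w t) with he_def
  set Δ : (Fin n ⊕ Fin (nZ - n)) → ℝ := Zvec Q (x t) - Zvec Q (xss t) with hΔ_def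
  set ζ : Fin q → ℝ := η t - ηss t with hζ_def
  have hPsym : Pᵀ = P := by
    have h := hP.1
    rwa [Matrix.IsHermitian, Matrix.conjTranspose_eq_transpose_of_trivial] at h
  have he : C *ᵥ Δ = e := by
    have h2 : C.mulVec (Zvec Q (xss t)) = -(F.mulVec (w t)) :=
      eq_neg_of_add_eq_zero_left (hess t)
    rw [hΔ_def, Matrix.mulVec_sub, h2, sub_neg_eq_add, he_def]
  have hIZ : ∀ y : Fin n → ℝ, 𝓘 *ᵥ Zvec Q y = y := by
    intro y
    simp [h𝓘, calI, Zvec]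
  have hIΔ : 𝓘 *ᵥ Δ = x t - xss t := by
    rw [hΔ_def, Matrix.mulVec_sub, hIZ, hIZ]
  set v : Fin n → ℝ := (A + B * K) *ᵥ Δ + (B *ᵥ (Ξᵀ *ᵥ ζ) - B *ᵥ (Khat *ᵥ e))
    with hv_def
  have hxd : HasDerivAt (fun s => x s - xss s) v t := by
    have h : HasDerivAt (fun s => x s - xss s) _ t := (hx t).sub (hxss t)
    convert h using 1
    rw [hv_def, hΔ_def, hζ_def, he_def]
    simp only [Matrix.add_mulVec, Matrix.mulVec_sub, Matrix.mulVec_add,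
      ← Matrix.mulVec_mulVec]
    abel
  set vζ : Fin q → ℝ := S *ᵥ ζ - α • (Ξ *ᵥ e) with hvζ_def
  have hζd : HasDerivAt (fun s => η s - ηss s) vζ t := by
    have h : HasDerivAt (fun s => η s - ηss s) _ t := (hη t).sub (hηss t)
    convert h using 1
    rw [hvζ_def, hζ_def, he_def]
    simp only [Matrix.mulVec_sub]
    abel
  set d : ℝ := (1/2 : ℝ) * (v ⬝ᵥ P *ᵥ (x t - xss t) + (x t - xss t) ⬝ᵥ P *ᵥ v) +
    (1 / (2 * α)) * (vζ ⬝ᵥ ζ + ζ ⬝ᵥ vζ) with hd_def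
  have hV : HasDerivAt (fun s =>
      (1/2 : ℝ) * ((x s - xss s) ⬝ᵥ P.mulVec (x s - xss s)) +
      (1 / (2 * α)) * ((η s - ηss s) ⬝ᵥ (η s - ηss s))) d t := by
    exact ((hasDerivAt_dot_mulVec P hxd hxd).const_mul (1/2 : ℝ)).add
      ((hasDerivAt_dot hζd hζd).const_mul (1 / (2 * α)))
  refine ⟨d, hV, ?_, ?_⟩
  · set T : ℝ := Δ ⬝ᵥ (𝓘ᵀ * (P * (A + B * K))) *ᵥ Δ with hT_def
    have h1 : (𝓘 *ᵥ Δ) ⬝ᵥ P *ᵥ ((A + B * K) *ᵥ Δ) = T := by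
      rw [Matrix.mulVec_mulVec, dot_shift, Matrix.mulVec_mulVec, hT_def]
    have h2 : ∀ u : Fin m → ℝ, (𝓘 *ᵥ Δ) ⬝ᵥ P *ᵥ (B *ᵥ u) = e ⬝ᵥ u := by
      intro u
      rw [Matrix.mulVec_mulVec, dot_shift, Matrix.mulVec_mulVec, ← Matrix.mul_assoc,
        Matrix.mul_assoc 𝓘ᵀ P B, hPB, ← dot_shift, he]
    have hterm : (x t - xss t) ⬝ᵥ P *ᵥ v = T + (e ⬝ᵥ (Ξᵀ *ᵥ ζ) - e ⬝ᵥ (Khat *ᵥ e)) := by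
      rw [hv_def, ← hIΔ]
      simp only [Matrix.mulVec_add, Matrix.mulVec_sub, dotProduct_add, dotProduct_sub]
      rw [h1, h2, h2]
    have hsymterm : v ⬝ᵥ P *ᵥ (x t - xss t) = (x t - xss t) ⬝ᵥ P *ᵥ v := by
      rw [dotProduct_comm, dotProduct_mulVec, ← mulVec_transpose, hPsym]
    have hζS : ζ ⬝ᵥ S *ᵥ ζ = 0 := by
      have hS' : S = -Sᵀ := eq_neg_of_add_eq_zero_left hS
      have hh : ζ ⬝ᵥ S *ᵥ ζ = -(ζ ⬝ᵥ S *ᵥ ζ) := by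
        nth_rewrite 1 [hS']
        rw [Matrix.neg_mulVec, dotProduct_neg, ← dot_shift, dotProduct_comm]
      linarith
    have hζterm : ζ ⬝ᵥ vζ = -(α * (e ⬝ᵥ (Ξᵀ *ᵥ ζ))) := by
      rw [hvζ_def, dotProduct_sub, hζS, dotProduct_smul, smul_eq_mul,
        dotProduct_comm, dot_shift]
      ring
    have hζterm2 : vζ ⬝ᵥ ζ = ζ ⬝ᵥ vζ := dotProduct_comm _ _
    have hTle : T + T ≤ 0 := by
      have h := hLMI.dotProduct_mulVec_nonneg Δ
      simp only [star_trivial, Matrix.neg_mulVec, dotProduct_neg,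
        Matrix.add_mulVec, dotProduct_add] at h
      have htr : Δ ⬝ᵥ (((A + B * K)ᵀ * P) * 𝓘) *ᵥ Δ = T := by
        have hMT : ((A + B * K)ᵀ * P) * 𝓘 = (𝓘ᵀ * (P * (A + B * K)))ᵀ := by
          rw [Matrix.transpose_mul, Matrix.transpose_mul, Matrix.transpose_transpose,
            hPsym, Matrix.mul_assoc]
        rw [hMT, ← dot_shift, dotProduct_comm, hT_def]
      rw [htr] at h
      linarith
    have heK : 0 ≤ e ⬝ᵥ Khat *ᵥ e := by
      have h := hKhat.dotProduct_mulVec_nonneg e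
      simpa using h
    rw [hd_def, hsymterm, hterm, hζterm2, hζterm]
    have hα' : α ≠ 0 := ne_of_gt hα
    have hkey : (1/2 : ℝ) * ((T + (e ⬝ᵥ (Ξᵀ *ᵥ ζ) - e ⬝ᵥ (Khat *ᵥ e))) +
        (T + (e ⬝ᵥ (Ξᵀ *ᵥ ζ) - e ⬝ᵥ (Khat *ᵥ e)))) +
        (1 / (2 * α)) * (-(α * (e ⬝ᵥ (Ξᵀ *ᵥ ζ))) + -(α * (e ⬝ᵥ (Ξᵀ *ᵥ ζ)))) =
        (1/2 : ℝ) * (T + T) - e ⬝ᵥ (Khat *ᵥ e) := by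
      field_simp
      ring
    rw [hkey]
    linarith
  · have h := hKhat.dotProduct_mulVec_nonneg e
    simp only [star_trivial] at h
    linarith
end
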